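/- Let N ≥ 1, let p_1,…,p_N ∈ (0,1), and set c_i = min{p_i, 1 − p_i}. Fix λ ≥ 0 and define D̃*_i = min{λ, c_i}. Then for every tuple (D̃_1,…,D̃_N) with 0 ≤ D̃_i ≤ c_i for all i and Σ_{i=1}^N D̃_i = Σ_{i=1}^N D̃*_i, one has Σ_{i=1}^N (H(p_i) − H(D̃*_i)) ≤ Σ_{i=1}^N (H(p_i) − H(D̃_i)); that is, the reverse water-filling allocation D̃*_i = min{λ, p_i, 1−p_i} minimizes the total rate Σ_i (H(p_i) − H(D̃_i)) subject to the total-distortion constraint. -/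

import Mathlib

/-!
Binary entropy is concave with derivative `log (1 - a) - log a`, which decreases in `a`.
Put `t = min λ 1/2` and `s = log (1 - t) - log t`. On `[0, c_i]` the line through
`(D̃*_i, H(D̃*_i))` of slope `s` lies above `H`: it is the tangent when `D̃*_i = λ`, and when
`D̃*_i = c_i < λ` the tangent there is steeper, which only helps to the left of `c_i`.
Summing these Kuhn–Tucker inequalities, the linear terms cancel since `∑ D̃_i = ∑ D̃*_i`.
For `λ ≤ 0` the constraints force `D̃ = D̃*`.
-/

/-- The binary entropy function (base 2), with `H 0 = H 1 = 0`. -/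
noncomputable def H2 (u : ℝ) : ℝ := -u * Real.logb 2 u - (1 - u) * Real.logb 2 (1 - u)

open Real Finset

lemma ConcaveOn.le_add_mul_sub_of_hasDerivAt {S : Set ℝ} {f : ℝ → ℝ} {f' x y : ℝ}
    (hf : ConcaveOn ℝ S f) (hx : x ∈ S) (hy : y ∈ S) (hf' : HasDerivAt f f' x) :
    f y ≤ f x + f' * (y - x) := by
  rcases lt_trichotomy x y with hxy | rfl | hyx
  · have h := hf.slope_le_of_hasDerivAt hx hy hxy hf'
    rw [slope_def_field, div_le_iff₀ (sub_pos.2 hxy)] at h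
    linarith
  · simp
  · have h := hf.le_slope_of_hasDerivAt hy hx hyx hf'
    rw [slope_def_field, le_div_iff₀ (sub_pos.2 hyx)] at h
    linarith

lemma binEntropy_le_add_mul_sub {a x : ℝ} (ha₀ : 0 < a) (ha₁ : a < 1) (hx₀ : 0 ≤ x)
    (hx₁ : x ≤ 1) :
    binEntropy x ≤ binEntropy a + (log (1 - a) - log a) * (x - a) :=
  strictConcave_binEntropy.concaveOn.le_add_mul_sub_of_hasDerivAt ⟨ha₀.le, ha₁.le⟩ ⟨hx₀, hx₁⟩
    (hasDerivAt_binEntropy ha₀.ne' ha₁.ne)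

lemma log_one_sub_sub_log_le_of_le {a b : ℝ} (ha : 0 < a) (hab : a ≤ b) (hb : b < 1) :
    log (1 - b) - log b ≤ log (1 - a) - log a := by
  have h₁ : log (1 - b) ≤ log (1 - a) := log_le_log (by linarith) (by linarith)
  have h₂ : log a ≤ log b := log_le_log ha hab
  linarith

lemma binEntropy_le_waterFilling {lam c x : ℝ} (hlam : 0 < lam) (hx₀ : 0 ≤ x) (hxc : x ≤ c)
    (hc : c ≤ 2⁻¹) :
    binEntropy x ≤ binEntropy (min lam c)
      + (log (1 - min lam 2⁻¹) - log (min lam 2⁻¹)) * (x - min lam c) := by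
  rcases (hx₀.trans hxc).eq_or_lt with rfl | hc₀
  · obtain rfl : x = 0 := le_antisymm hxc hx₀
    simp [min_eq_right hlam.le]
  rcases le_total lam c with hlc | hcl
  · rw [min_eq_left hlc, min_eq_left (hlc.trans hc)]
    exact binEntropy_le_add_mul_sub hlam (by linarith) hx₀ (by linarith)
  · rw [min_eq_right hcl]
    have hslope := log_one_sub_sub_log_le_of_le hc₀ (le_min hcl hc)
      (by linarith [min_le_right lam 2⁻¹])
    calc binEntropy x ≤ binEntropy c + (log (1 - c) - log c) * (x - c) :=
          binEntropy_le_add_mul_sub hc₀ (by linarith) hx₀ (by linarith)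
      _ ≤ _ := by
          have := mul_le_mul_of_nonpos_right hslope (sub_nonpos.2 hxc)
          linarith

lemma Finset.sum_le_sum_of_le_add_mul_sub {ι : Type*} (s : Finset ι) {f : ℝ → ℝ} {x y : ι → ℝ}
    (g : ℝ) (h : ∀ i ∈ s, f (x i) ≤ f (y i) + g * (x i - y i))
    (hsum : ∑ i ∈ s, x i = ∑ i ∈ s, y i) :
    ∑ i ∈ s, f (x i) ≤ ∑ i ∈ s, f (y i) := by
  calc ∑ i ∈ s, f (x i) ≤ ∑ i ∈ s, (f (y i) + g * (x i - y i)) := sum_le_sum h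
    _ = ∑ i ∈ s, f (y i) := by rw [sum_add_distrib, ← mul_sum, sum_sub_distrib, hsum]; simp

lemma H2_eq_binEntropy_div (u : ℝ) : H2 u = binEntropy u / log 2 := by
  simp only [H2, binEntropy, logb, log_inv]
  ring

lemma min_self_one_sub_le_half (p : ℝ) : min p (1 - p) ≤ 2⁻¹ := by
  rcases le_total p 2⁻¹ with h | h
  · exact (min_le_left _ _).trans h
  · exact (min_le_right _ _).trans (by linarith)

theorem stmt_15_general (N : ℕ) (p : Fin N → ℝ) (lam : ℝ)
    (Dt : Fin N → ℝ) (hDt0 : ∀ i, 0 ≤ Dt i)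
    (hDtc : ∀ i, Dt i ≤ min (p i) (1 - p i))
    (hsum : ∑ i, Dt i = ∑ i, min lam (min (p i) (1 - p i))) :
    ∑ i, (H2 (p i) - H2 (min lam (min (p i) (1 - p i))))
      ≤ ∑ i, (H2 (p i) - H2 (Dt i)) := by
  suffices h : ∑ i, binEntropy (Dt i) ≤ ∑ i, binEntropy (min lam (min (p i) (1 - p i))) by
    simp only [sum_sub_distrib, H2_eq_binEntropy_div, ← sum_div]
    gcongr
  rcases le_or_gt lam 0 with hlam | hlam
  · have hle : ∀ i ∈ univ, min lam (min (p i) (1 - p i)) ≤ Dt i :=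
      fun i _ ↦ (min_le_left _ _).trans (hlam.trans (hDt0 i))
    have heq := (sum_eq_sum_iff_of_le hle).1 hsum.symm
    exact (sum_congr rfl fun i hi ↦ congrArg binEntropy (heq i hi).symm).le
  · exact sum_le_sum_of_le_add_mul_sub univ _ (fun i _ ↦ binEntropy_le_waterFilling hlam
      (hDt0 i) (hDtc i) (min_self_one_sub_le_half (p i))) hsum

/-- Let `p 1,…,p N ∈ (0,1)`, `c i = min {p i, 1 - p i}`, fix `λ ≥ 0`
and define the reverse water-filling allocation `D̃* i = min {λ, c i}`. Then for every
tuple `(D̃ i)` with `0 ≤ D̃ i ≤ c i` and `∑ D̃ i = ∑ D̃* i`, one has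
`∑ (H(p i) - H(D̃* i)) ≤ ∑ (H(p i) - H(D̃ i))`; i.e. the reverse water-filling
allocation minimizes the total rate subject to the total-distortion constraint. -/
theorem stmt_15 (N : ℕ) (hN : 1 ≤ N) (p : Fin N → ℝ)
    (hp : ∀ i, 0 < p i ∧ p i < 1) (lam : ℝ) (hlam : 0 ≤ lam)
    (Dt : Fin N → ℝ) (hDt0 : ∀ i, 0 ≤ Dt i)
    (hDtc : ∀ i, Dt i ≤ min (p i) (1 - p i))
    (hsum : ∑ i, Dt i = ∑ i, min lam (min (p i) (1 - p i))) :
    ∑ i, (H2 (p i) - H2 (min lam (min (p i) (1 - p i))))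
      ≤ ∑ i, (H2 (p i) - H2 (Dt i)) :=
  stmt_15_general N p lam Dt hDt0 hDtc hsum
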